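/- arXiv:1403.1268 — 4 statements merged into one kernel-verified Lean document; each statement's English description precedes it below -/
import Mathlib

section
/- There are no integers n ≥ 2 and m ∈ ℤ with λ = m + 1/2 if n is odd and λ = m if n is even, such that (1/3)·n·(144·λ²·(n−12) + (n−36)·n + 431) + 92 = 0. -/
/-- Extremality condition over Hirzebruch surfaces has no solutions:
there are no integers `n ≥ 2` and `m`, with `λ = m + 1/2` for odd `n` and
`λ = m` for even `n`, such that
`(1/3)·n·(144·λ²·(n−12) + (n−36)·n + 431) + 92 = 0`. -/
theorem no_extremal_spectral_cover_Hirzebruch :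
    ¬ ∃ (n m : ℤ) (lam : ℚ), 2 ≤ n ∧
      ((Odd n → lam = (m : ℚ) + 1/2) ∧ (¬ Odd n → lam = (m : ℚ))) ∧
      (1/3 : ℚ) * (n : ℚ) *
        (144 * lam ^ 2 * ((n : ℚ) - 12) + ((n : ℚ) - 36) * (n : ℚ) + 431) + 92 = 0 := by
  rintro ⟨n, m, lam, hn, ⟨hodd, heven⟩, heq⟩
  by_cases h : Odd n
  · -- odd case : lam = m + 1/2
    have hl := hodd h
    subst hl
    have hq : (n : ℚ) * (36 * ((2*m+1) : ℚ) ^ 2 * ((n:ℚ) - 12) + ((n:ℚ) - 36) * (n:ℚ) + 431)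
        = -276 := by linear_combination 3 * heq
    have hz : n * (36 * (2*m+1) ^ 2 * (n - 12) + (n - 36) * n + 431) = -276 := by
      exact_mod_cast hq
    obtain ⟨s, hs, hs0⟩ : ∃ s : ℤ, (2*m+1)^2 = s ∧ 0 ≤ s := ⟨_, rfl, sq_nonneg _⟩
    rw [hs] at hz
    have h13 : n ≤ 12 := by
      by_contra hb
      push_neg at hb
      nlinarith [mul_nonneg hs0 (by omega : (0:ℤ) ≤ n - 12), sq_nonneg (n - 18)]
    interval_cases n <;> omega
  · -- even case : lam = m
    have hl := heven h
    subst hl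
    have hq : (n : ℚ) * (144 * (m : ℚ) ^ 2 * ((n:ℚ) - 12) + ((n:ℚ) - 36) * (n:ℚ) + 431)
        = -276 := by linear_combination 3 * heq
    have hz : n * (144 * m ^ 2 * (n - 12) + (n - 36) * n + 431) = -276 := by
      exact_mod_cast hq
    obtain ⟨s, hs, hs0⟩ : ∃ s : ℤ, m^2 = s ∧ 0 ≤ s := ⟨_, rfl, sq_nonneg _⟩
    rw [hs] at hz
    have h13 : n ≤ 12 := by
      by_contra hb
      push_neg at hb
      nlinarith [mul_nonneg hs0 (by omega : (0:ℤ) ≤ n - 12), sq_nonneg (n - 18)]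
    interval_cases n <;> omega
end

section
/- There are no integers n ≥ 2 and m ∈ ℤ with λ = m + 1/2 if n is odd and λ = m if n is even, such that (7/24)·n·(144·λ²·(n−12) + (n−36)·n + 431) + 82 = 0. -/
/-- Extremality condition over blowups of Hirzebruch surfaces has no solutions:
there are no integers `n ≥ 2` and `m`, with `λ = m + 1/2` for odd `n` and
`λ = m` for even `n`, such that
`(7/24)·n·(144·λ²·(n−12) + (n−36)·n + 431) + 82 = 0`. -/
theorem no_extremal_spectral_cover_blowup_Hirzebruch :
    ¬ ∃ (n m : ℤ) (lam : ℚ), 2 ≤ n ∧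
      ((Odd n → lam = (m : ℚ) + 1/2) ∧ (¬ Odd n → lam = (m : ℚ))) ∧
      (7/24 : ℚ) * (n : ℚ) *
        (144 * lam ^ 2 * ((n : ℚ) - 12) + ((n : ℚ) - 36) * (n : ℚ) + 431) + 82 = 0 := by
  rintro ⟨n, m, lam, hn, ⟨ho, he⟩, heq⟩
  by_cases h : Odd n
  · rw [ho h] at heq
    have key : ((7 * n * ((144*m^2+144*m+36)*(n-12)+(n-36)*n+431) + 1968 : ℤ) : ℚ)
        = 24 * ((7/24 : ℚ) * (n : ℚ) *
        (144 * ((m : ℚ) + 1/2) ^ 2 * ((n : ℚ) - 12) + ((n : ℚ) - 36) * (n : ℚ) + 431) + 82) := by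
      push_cast; ring
    rw [heq, mul_zero] at key
    have key2 : 7 * n * ((144*m^2+144*m+36)*(n-12)+(n-36)*n+431) + 1968 = 0 := by
      exact_mod_cast key
    set K := (144*m^2+144*m+36)*(n-12)+(n-36)*n+431 with hK
    have : 7 * (n * K) + 1968 = 0 := by linarith
    omega
  · rw [he h] at heq
    have key : ((7 * n * (144*m^2*(n-12)+(n-36)*n+431) + 1968 : ℤ) : ℚ)
        = 24 * ((7/24 : ℚ) * (n : ℚ) *
        (144 * (m : ℚ) ^ 2 * ((n : ℚ) - 12) + ((n : ℚ) - 36) * (n : ℚ) + 431) + 82) := by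
      push_cast; ring
    rw [heq, mul_zero] at key
    have key2 : 7 * n * (144*m^2*(n-12)+(n-36)*n+431) + 1968 = 0 := by
      exact_mod_cast key
    set K := 144*m^2*(n-12)+(n-36)*n+431 with hK
    have : 7 * (n * K) + 1968 = 0 := by linarith
    omega
end

section
/- For every r ∈ {0,1,...,9}, there are no integers n ≥ 2 and m ∈ ℤ with λ = m + 1/2 if n is odd and λ = m if n is even, such that −(1/24)·(r−9)·(n·(144·λ²·(n−12) + (n−36)·n + 431) + 264) + r + 3 = 0. -/
/-- Extremality condition over del Pezzo surfaces `dP_r`, `r = 0,…,9`, has no solutions: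
for every such `r` there are no integers `n ≥ 2` and `m`, with `λ = m + 1/2` for odd `n`
and `λ = m` for even `n`, such that
`−(1/24)·(r−9)·(n·(144·λ²·(n−12) + (n−36)·n + 431) + 264) + r + 3 = 0`. -/
theorem no_extremal_spectral_cover_delPezzo :
    ∀ r : ℤ, 0 ≤ r → r ≤ 9 →
      ¬ ∃ (n m : ℤ) (lam : ℚ), 2 ≤ n ∧
        ((Odd n → lam = (m : ℚ) + 1/2) ∧ (¬ Odd n → lam = (m : ℚ))) ∧
        -(1/24 : ℚ) * ((r : ℚ) - 9) *
            ((n : ℚ) * (144 * lam ^ 2 * ((n : ℚ) - 12) + ((n : ℚ) - 36) * (n : ℚ) + 431)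
              + 264) + (r : ℚ) + 3 = 0 := by
  intro r hr0 hr9 ⟨n, m, lam, hn, ⟨hodd, heven⟩, heq⟩
  -- write lam = j/2 for an integer j
  obtain ⟨j, hj⟩ : ∃ j : ℤ, lam = (j : ℚ) / 2 := by
    by_cases h : Odd n
    · exact ⟨2 * m + 1, by rw [hodd h]; push_cast; ring⟩
    · exact ⟨2 * m, by rw [heven h]; push_cast; ring⟩
  subst hj
  -- integer form of the equation
  have key : (9 - r) * (n * (36 * j ^ 2 * (n - 12) + (n - 36) * n + 431) + 264)
      = -24 * (r + 3) := by
    have : ((9 - r) * (n * (36 * j ^ 2 * (n - 12) + (n - 36) * n + 431) + 264) : ℚ)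
        = (-24 * (r + 3) : ℚ) := by
      linear_combination 24 * heq
    exact_mod_cast this
  set s : ℤ := j ^ 2 with hs
  have hs0 : 0 ≤ s := sq_nonneg j
  have hn11 : n ≤ 11 := by
    by_contra h
    push_neg at h
    have h12 : 12 ≤ n := h
    have h1 : 0 ≤ s * (n - 12) := mul_nonneg hs0 (by omega)
    nlinarith [sq_nonneg (n - 18), mul_nonneg h1 (by omega : (0:ℤ) ≤ n),
      mul_nonneg (mul_nonneg (mul_nonneg (by omega : (0:ℤ) ≤ 9 - r) hs0) (by omega : (0:ℤ) ≤ n - 12)) (by omega : (0:ℤ) ≤ n),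
      mul_nonneg (by omega : (0:ℤ) ≤ 9 - r) (mul_nonneg (by omega : (0:ℤ) ≤ n) (sq_nonneg (n - 18)))]
  interval_cases r <;> interval_cases n <;> omega
end

section
/- Let c₁², c₂ be the topological data of a base surface B with c₂ + c₁²·(11 + (n³−n)/24 − (n/2)·(12−n)·(λ² − 1/4)) = 0 required for an extremal spectral cover bundle, where η = 12·c₁(B). Then for each of the four families (Hirzebruch: (c₁²,c₂)=(8,4); blowups of Hirzebruch: (7,5); del Pezzo dP_r: (9−r, 3+r) for r=0,...,9; Enriques: (0,12)), there is no integer n ≥ 2 and admissible λ (half-integer for n odd, integer for n even) satisfying the equation. -/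
set_option maxHeartbeats 1000000 in
lemma aux_no_sol (a b n k : ℤ)
    (hab : (a = 8 ∧ b = 4) ∨ (a = 7 ∧ b = 5) ∨
      (∃ r : ℤ, 0 ≤ r ∧ r ≤ 9 ∧ a = 9 - r ∧ b = 3 + r) ∨ (a = 0 ∧ b = 12))
    (hn : 2 ≤ n) (hpar : n % 2 = k % 2)
    (h : 24 * b + a * (264 + n ^ 3 - n - 3 * n * (12 - n) * (k ^ 2 - 1)) = 0) :
    False := by
  obtain ⟨h0, h9, hb⟩ : 0 ≤ a ∧ a ≤ 9 ∧ b = 12 - a := by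
    rcases hab with ⟨ha, hb⟩ | ⟨ha, hb⟩ | ⟨r, hr0, hr9, ha, hb⟩ | ⟨ha, hb⟩ <;> omega
  subst hb
  have hn11 : n ≤ 11 := by
    by_contra hcon
    push_neg at hcon
    rcases (by omega : a = 0 ∨ 1 ≤ a) with rfl | ha1
    · norm_num at h
    · nlinarith [mul_nonneg (mul_nonneg (mul_nonneg (by linarith : (0:ℤ) ≤ a)
          (by linarith : (0:ℤ) ≤ n)) (by linarith : (0:ℤ) ≤ n - 12)) (sq_nonneg k),
        mul_nonneg (mul_nonneg (mul_nonneg (by linarith : (0:ℤ) ≤ a)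
          (by linarith : (0:ℤ) ≤ n)) (by linarith : (0:ℤ) ≤ n))
          (by linarith : (0:ℤ) ≤ n - 12),
        mul_nonneg (mul_nonneg (by linarith : (0:ℤ) ≤ a)
          (by linarith : (0:ℤ) ≤ n)) (by linarith : (0:ℤ) ≤ n - 12),
        mul_nonneg (by linarith : (0:ℤ) ≤ a) (by linarith : (0:ℤ) ≤ n - 12)]
  rcases (by omega : a = 0 ∨ 1 ≤ a) with rfl | ha1
  · norm_num at h
  · interval_cases a <;> interval_cases n <;>
      (have hk1 : -8 ≤ k := by nlinarith
       have hk2 : k ≤ 8 := by nlinarith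
       interval_cases k <;> omega)

/-- Combined non-existence of extremal spectral cover bundles: for each of the four
families of base surfaces (Hirzebruch `(c₁²,c₂)=(8,4)`, their blowups `(7,5)`,
del Pezzo `dP_r` `(9−r,3+r)` for `r = 0,…,9`, Enriques `(0,12)`) there are
no integer `n ≥ 2` and admissible `λ` (half-integer for odd `n`, integer for even `n`)
with `c₂ + c₁²·(11 + (n³−n)/24 − (n/2)·(12−n)·(λ² − 1/4)) = 0`. -/
theorem no_extremal_spectral_cover_all_bases :
    ∀ c1sq c2 : ℚ,
      ((c1sq = 8 ∧ c2 = 4) ∨ (c1sq = 7 ∧ c2 = 5) ∨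
        (∃ r : ℤ, 0 ≤ r ∧ r ≤ 9 ∧ c1sq = 9 - (r : ℚ) ∧ c2 = 3 + (r : ℚ)) ∨
        (c1sq = 0 ∧ c2 = 12)) →
      ¬ ∃ (n m : ℤ) (lam : ℚ), 2 ≤ n ∧
        ((Odd n → lam = (m : ℚ) + 1/2) ∧ (¬ Odd n → lam = (m : ℚ))) ∧
        c2 + c1sq * (11 + ((n : ℚ) ^ 3 - (n : ℚ)) / 24
          - (n : ℚ) / 2 * (12 - (n : ℚ)) * (lam ^ 2 - 1/4)) = 0 := by
  intro c1sq c2 hfam ⟨n, m, lam, hn, ⟨hodd, heven⟩, heq⟩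
  obtain ⟨a, b, hab, ha, hb⟩ : ∃ a b : ℤ,
      ((a = 8 ∧ b = 4) ∨ (a = 7 ∧ b = 5) ∨
        (∃ r : ℤ, 0 ≤ r ∧ r ≤ 9 ∧ a = 9 - r ∧ b = 3 + r) ∨ (a = 0 ∧ b = 12)) ∧
      c1sq = (a : ℚ) ∧ c2 = (b : ℚ) := by
    rcases hfam with ⟨h1, h2⟩ | ⟨h1, h2⟩ | ⟨r, hr0, hr9, h1, h2⟩ | ⟨h1, h2⟩
    · exact ⟨8, 4, Or.inl ⟨rfl, rfl⟩, by norm_num [h1, h2]⟩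
    · exact ⟨7, 5, Or.inr (Or.inl ⟨rfl, rfl⟩), by norm_num [h1, h2]⟩
    · exact ⟨9 - r, 3 + r, Or.inr (Or.inr (Or.inl ⟨r, hr0, hr9, rfl, rfl⟩)),
        by constructor <;> [rw [h1]; rw [h2]] <;> push_cast <;> ring⟩
    · exact ⟨0, 12, Or.inr (Or.inr (Or.inr ⟨rfl, rfl⟩)), by norm_num [h1, h2]⟩
  rw [ha, hb] at heq
  by_cases hno : Odd n
  · rw [hodd hno] at heq
    refine aux_no_sol a b n (2 * m + 1) hab hn ?_ ?_
    · rcases hno with ⟨t, ht⟩; omega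
    · have hQ : ((24 * b + a * (264 + n ^ 3 - n
          - 3 * n * (12 - n) * ((2 * m + 1) ^ 2 - 1)) : ℤ) : ℚ) = 0 := by
        push_cast
        linear_combination (24 : ℚ) * heq
      exact_mod_cast hQ
  · rw [heven hno] at heq
    refine aux_no_sol a b n (2 * m) hab hn ?_ ?_
    · rw [Int.odd_iff] at hno; omega
    · have hQ : ((24 * b + a * (264 + n ^ 3 - n
          - 3 * n * (12 - n) * ((2 * m) ^ 2 - 1)) : ℤ) : ℚ) = 0 := by
        push_cast
        linear_combination (24 : ℚ) * heq
      exact_mod_cast hQ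
end
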